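/- arXiv:0812.2743 — 4 statements merged into one kernel-verified Lean document; each statement's English description precedes it below -/
import Mathlib

section
/- If A is an algebraic curvature tensor on a real inner product space (V,⟨·,·⟩) with Hermitian complex structure J satisfying both the Gray identity A(x,y,z,w)+A(Jx,Jy,Jz,Jw) = A(Jx,Jy,z,w)+A(x,y,Jz,Jw)+A(Jx,y,Jz,w)+A(x,Jy,z,Jw)+A(Jx,y,z,Jw)+A(x,Jy,Jz,w) and the W7 identity A(Jx,y,z,w)=A(x,y,Jz,w) for all x,y,z,w, then A = 0. -/
open scoped RealInnerProductSpace

/-!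
The `W₇` identity lets `J` move from the first slot to the third; with the symmetries of `A` it
moves freely between any two slots. Hence every term of the Gray identity carrying two `J`s
equals `-A x y z w` (gather both `J`s in one slot and use `J² = -1`), and the term with four
`J`s equals `A x y z w`. The Gray identity then reads `2 A = -6 A`.
-/

section JMovesFreely

variable {R M : Type*} [CommRing R] [AddCommGroup M] [Module R M] {J : M →ₗ[R] M}
  {A : M →ₗ[R] M →ₗ[R] M →ₗ[R] M →ₗ[R] R}

theorem apply_J₂_eq_apply_J₃ (hA1 : ∀ x y z w, A x y z w = -A y x z w)
    (hW7 : ∀ x y z w, A (J x) y z w = A x y (J z) w) (x y z w : M) :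
    A x (J y) z w = A x y (J z) w := by
  rw [hA1, hW7, ← hA1]

theorem apply_J₄_eq_apply_J₃ (hA1 : ∀ x y z w, A x y z w = -A y x z w)
    (hA2 : ∀ x y z w, A x y z w = A z w x y)
    (hW7 : ∀ x y z w, A (J x) y z w = A x y (J z) w) (x y z w : M) :
    A x y z (J w) = A x y (J z) w := by
  rw [hA2, apply_J₂_eq_apply_J₃ hA1 hW7, hA2, hW7]

theorem apply_J_J₃ (hJ2 : ∀ x, J (J x) = -x) (x y z w : M) :
    A x y (J (J z)) w = -A x y z w := by
  simp only [hJ2, map_neg, LinearMap.neg_apply]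

theorem apply_J₁_J₃ (hJ2 : ∀ x, J (J x) = -x)
    (hW7 : ∀ x y z w, A (J x) y z w = A x y (J z) w) (x y z w : M) :
    A (J x) y (J z) w = -A x y z w := by
  rw [hW7, apply_J_J₃ hJ2]

theorem apply_J₁_J₂ (hJ2 : ∀ x, J (J x) = -x)
    (hA1 : ∀ x y z w, A x y z w = -A y x z w)
    (hW7 : ∀ x y z w, A (J x) y z w = A x y (J z) w) (x y z w : M) :
    A (J x) (J y) z w = -A x y z w := by
  rw [hW7, apply_J₂_eq_apply_J₃ hA1 hW7, apply_J_J₃ hJ2]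

theorem apply_J₂_J₃ (hJ2 : ∀ x, J (J x) = -x)
    (hA1 : ∀ x y z w, A x y z w = -A y x z w)
    (hW7 : ∀ x y z w, A (J x) y z w = A x y (J z) w) (x y z w : M) :
    A x (J y) (J z) w = -A x y z w := by
  rw [apply_J₂_eq_apply_J₃ hA1 hW7, apply_J_J₃ hJ2]

theorem apply_J₃_J₄ (hJ2 : ∀ x, J (J x) = -x)
    (hA1 : ∀ x y z w, A x y z w = -A y x z w)
    (hA2 : ∀ x y z w, A x y z w = A z w x y)
    (hW7 : ∀ x y z w, A (J x) y z w = A x y (J z) w) (x y z w : M) :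
    A x y (J z) (J w) = -A x y z w := by
  rw [apply_J₄_eq_apply_J₃ hA1 hA2 hW7, apply_J_J₃ hJ2]

theorem apply_J₁_J₄ (hJ2 : ∀ x, J (J x) = -x)
    (hA1 : ∀ x y z w, A x y z w = -A y x z w)
    (hA2 : ∀ x y z w, A x y z w = A z w x y)
    (hW7 : ∀ x y z w, A (J x) y z w = A x y (J z) w) (x y z w : M) :
    A (J x) y z (J w) = -A x y z w := by
  rw [hW7, apply_J₃_J₄ hJ2 hA1 hA2 hW7]

theorem apply_J₂_J₄ (hJ2 : ∀ x, J (J x) = -x)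
    (hA1 : ∀ x y z w, A x y z w = -A y x z w)
    (hA2 : ∀ x y z w, A x y z w = A z w x y)
    (hW7 : ∀ x y z w, A (J x) y z w = A x y (J z) w) (x y z w : M) :
    A x (J y) z (J w) = -A x y z w := by
  rw [apply_J₂_eq_apply_J₃ hA1 hW7, apply_J₃_J₄ hJ2 hA1 hA2 hW7]

theorem apply_J₁_J₂_J₃_J₄ (hJ2 : ∀ x, J (J x) = -x)
    (hA1 : ∀ x y z w, A x y z w = -A y x z w)
    (hA2 : ∀ x y z w, A x y z w = A z w x y)
    (hW7 : ∀ x y z w, A (J x) y z w = A x y (J z) w) (x y z w : M) :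
    A (J x) (J y) (J z) (J w) = A x y z w := by
  rw [apply_J₁_J₂ hJ2 hA1 hW7, apply_J₃_J₄ hJ2 hA1 hA2 hW7, neg_neg]

end JMovesFreely

theorem stmt_0_general {V : Type*} [NormedAddCommGroup V] [InnerProductSpace ℝ V]
    (J : V →ₗ[ℝ] V) (hJ2 : ∀ x, J (J x) = -x)
    (A : V →ₗ[ℝ] V →ₗ[ℝ] V →ₗ[ℝ] V →ₗ[ℝ] ℝ)
    (hA1 : ∀ x y z w, A x y z w = -A y x z w)
    (hA2 : ∀ x y z w, A x y z w = A z w x y)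
    (hGray : ∀ x y z w, A x y z w + A (J x) (J y) (J z) (J w) =
      A (J x) (J y) z w + A x y (J z) (J w) + A (J x) y (J z) w +
      A x (J y) z (J w) + A (J x) y z (J w) + A x (J y) (J z) w)
    (hW7 : ∀ x y z w, A (J x) y z w = A x y (J z) w) :
    ∀ x y z w, A x y z w = 0 := by
  intro x y z w
  have h := hGray x y z w
  rw [apply_J₁_J₂_J₃_J₄ hJ2 hA1 hA2 hW7, apply_J₁_J₂ hJ2 hA1 hW7,
    apply_J₃_J₄ hJ2 hA1 hA2 hW7, apply_J₁_J₃ hJ2 hW7, apply_J₂_J₄ hJ2 hA1 hA2 hW7,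
    apply_J₁_J₄ hJ2 hA1 hA2 hW7, apply_J₂_J₃ hJ2 hA1 hW7] at h
  linarith

/-- An algebraic curvature tensor on a real inner product space with a
Hermitian complex structure `J` satisfying both the Gray identity and the `W₇` identity
vanishes. -/
theorem stmt_0 {V : Type*} [NormedAddCommGroup V] [InnerProductSpace ℝ V]
    (J : V →ₗ[ℝ] V) (hJ2 : ∀ x, J (J x) = -x)
    (hJinner : ∀ x y : V, ⟪J x, J y⟫ = ⟪x, y⟫)
    (A : V →ₗ[ℝ] V →ₗ[ℝ] V →ₗ[ℝ] V →ₗ[ℝ] ℝ)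
    (hA1 : ∀ x y z w, A x y z w = -A y x z w)
    (hA2 : ∀ x y z w, A x y z w = A z w x y)
    (hBianchi : ∀ x y z w, A x y z w + A y z x w + A z x y w = 0)
    (hGray : ∀ x y z w, A x y z w + A (J x) (J y) (J z) (J w) =
      A (J x) (J y) z w + A x y (J z) (J w) + A (J x) y (J z) w +
      A x (J y) z (J w) + A (J x) y z (J w) + A x (J y) (J z) w)
    (hW7 : ∀ x y z w, A (J x) y z w = A x y (J z) w) :
    ∀ x y z w, A x y z w = 0 :=
  stmt_0_general J hJ2 A hA1 hA2 hGray hW7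
end

section
/- If A is an algebraic curvature tensor satisfying A(Jx,y,z,w) = A(x,y,Jz,w) for all x,y,z,w (the W7 condition), then A also satisfies A(Jx,y,z,w) = A(x,y,z,Jw), A(Jx,y,z,w) = A(x,Jy,z,w), and A(Jx,Jy,z,w) = -A(x,y,z,w) for all x,y,z,w. -/
/-! Antisymmetry and pair symmetry move `J` from the third slot to the fourth. To move it to the
second slot, compare the Bianchi identities at `(Jx, y, z, w)` and `(x, Jy, z, w)`: the W₇ condition
(with antisymmetry) identifies their second and third terms, hence also their first terms.
Then `J² = -1` gives `A(Jx, Jy, z, w) = A(x, J²y, z, w) = -A(x, y, z, w)`. -/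

namespace CurvatureTensor

variable {R M : Type*} [CommRing R] [AddCommGroup M] [Module R M]
  {J : M →ₗ[R] M} {A : M →ₗ[R] M →ₗ[R] M →ₗ[R] M →ₗ[R] R}

theorem apply_J_first_eq_apply_J_fourth
    (hA1 : ∀ x y z w, A x y z w = -A y x z w)
    (hA2 : ∀ x y z w, A x y z w = A z w x y)
    (hW7 : ∀ x y z w, A (J x) y z w = A x y (J z) w) (x y z w : M) :
    A (J x) y z w = A x y z (J w) :=
  calc A (J x) y z w = A z w (J x) y := hA2 _ _ _ _
    _ = -A w z (J x) y := hA1 _ _ _ _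
    _ = -A (J w) z x y := by rw [hW7]
    _ = A z (J w) x y := by rw [hA1 (J w) z x y, neg_neg]
    _ = A x y z (J w) := (hA2 _ _ _ _).symm

theorem apply_J_first_eq_apply_J_second
    (hA1 : ∀ x y z w, A x y z w = -A y x z w)
    (hBianchi : ∀ x y z w, A x y z w + A y z x w + A z x y w = 0)
    (hW7 : ∀ x y z w, A (J x) y z w = A x y (J z) w) (x y z w : M) :
    A (J x) y z w = A x (J y) z w := by
  have second_terms : A (J y) z x w = A y z (J x) w := hW7 _ _ _ _
  have third_terms : A z (J x) y w = A z x (J y) w := by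
    rw [hA1, hW7, hA1 z]
  linear_combination hBianchi (J x) y z w - hBianchi x (J y) z w + second_terms - third_terms

theorem apply_J_first_J_second_eq_neg (hJ2 : ∀ x, J (J x) = -x)
    (hJ12 : ∀ x y z w, A (J x) y z w = A x (J y) z w) (x y z w : M) :
    A (J x) (J y) z w = -A x y z w := by
  rw [hJ12, hJ2, map_neg, LinearMap.neg_apply, LinearMap.neg_apply]

end CurvatureTensor

/-- An algebraic curvature tensor satisfying the `W₇` condition
`A(Jx,y,z,w) = A(x,y,Jz,w)` also satisfies the other `W₇`-type identities. -/
theorem stmt_1 {V : Type*} [AddCommGroup V] [Module ℝ V]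
    (J : V →ₗ[ℝ] V) (hJ2 : ∀ x, J (J x) = -x)
    (A : V →ₗ[ℝ] V →ₗ[ℝ] V →ₗ[ℝ] V →ₗ[ℝ] ℝ)
    (hA1 : ∀ x y z w, A x y z w = -A y x z w)
    (hA2 : ∀ x y z w, A x y z w = A z w x y)
    (hBianchi : ∀ x y z w, A x y z w + A y z x w + A z x y w = 0)
    (hW7 : ∀ x y z w, A (J x) y z w = A x y (J z) w) :
    (∀ x y z w, A (J x) y z w = A x y z (J w)) ∧
    (∀ x y z w, A (J x) y z w = A x (J y) z w) ∧
    (∀ x y z w, A (J x) (J y) z w = -A x y z w) :=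
  have hJ12 := CurvatureTensor.apply_J_first_eq_apply_J_second hA1 hBianchi hW7
  ⟨CurvatureTensor.apply_J_first_eq_apply_J_fourth hA1 hA2 hW7, hJ12,
    CurvatureTensor.apply_J_first_J_second_eq_neg hJ2 hJ12⟩
end

section
/- For any multilinear map Θ : V×V×V×V → ℝ symmetric in its first two arguments, symmetric in its last two arguments, and satisfying Θ(Jx,Jy,z,w) = Θ(x,y,z,w) for all x,y,z,w, the algebraic curvature tensor L(Θ)(x,y,z,w) := Θ(x,z,y,w)+Θ(y,w,x,z)-Θ(x,w,y,z)-Θ(y,z,x,w) satisfies the Gray identity: L(Θ)(x,y,z,w)+L(Θ)(Jx,Jy,Jz,Jw) = L(Θ)(Jx,Jy,z,w)+L(Θ)(x,y,Jz,Jw)+L(Θ)(Jx,y,Jz,w)+L(Θ)(x,Jy,z,Jw)+L(Θ)(Jx,y,z,Jw)+L(Θ)(x,Jy,Jz,w) for all x,y,z,w. -/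
/-!
Each of the four terms of `L(Θ)` satisfies the Gray identity on its own, and the identity
is preserved by sums, differences and by the swaps `x ↔ y`, `z ↔ w`, which turn the first
term `Θ x z y w` into the other three. For that first term, `J`-invariance of the first pair
together with `J² = -1` gives `Θ (J a) b = -Θ a (J b)`; moving every `J` out of the first
slot this way, the six terms on the right cancel in pairs down to the two on the left.
-/

/-- The linearization `L(Θ)` of a tensor `Θ` symmetric in its first two and in its
last two arguments. -/
def LTheta {V : Type*} [AddCommGroup V] [Module ℝ V]
    (Θ : V →ₗ[ℝ] V →ₗ[ℝ] V →ₗ[ℝ] V →ₗ[ℝ] ℝ) (x y z w : V) : ℝ :=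
  Θ x z y w + Θ y w x z - Θ x w y z - Θ y z x w

section GrayIdentity

variable {V M : Type*} [AddCommGroup M]

def SatisfiesGrayIdentity (J : V → V) (R : V → V → V → V → M) : Prop :=
  ∀ x y z w, R x y z w + R (J x) (J y) (J z) (J w) =
    R (J x) (J y) z w + R x y (J z) (J w) + R (J x) y (J z) w +
    R x (J y) z (J w) + R (J x) y z (J w) + R x (J y) (J z) w

namespace SatisfiesGrayIdentity

variable {J : V → V} {R S : V → V → V → V → M}

theorem add (hR : SatisfiesGrayIdentity J R) (hS : SatisfiesGrayIdentity J S) :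
    SatisfiesGrayIdentity J (fun x y z w => R x y z w + S x y z w) := by
  intro x y z w
  have := congrArg₂ (· + ·) (hR x y z w) (hS x y z w)
  simp only at this ⊢
  rw [← sub_eq_zero, ← sub_eq_zero.2 this]
  abel

theorem sub (hR : SatisfiesGrayIdentity J R) (hS : SatisfiesGrayIdentity J S) :
    SatisfiesGrayIdentity J (fun x y z w => R x y z w - S x y z w) := by
  intro x y z w
  have := congrArg₂ (· - ·) (hR x y z w) (hS x y z w)
  simp only at this ⊢
  rw [← sub_eq_zero, ← sub_eq_zero.2 this]
  abel

theorem swap_left (hR : SatisfiesGrayIdentity J R) :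
    SatisfiesGrayIdentity J (fun x y z w => R y x z w) := by
  intro x y z w
  rw [hR y x z w]
  abel

theorem swap_right (hR : SatisfiesGrayIdentity J R) :
    SatisfiesGrayIdentity J (fun x y z w => R x y w z) := by
  intro x y z w
  rw [hR x y w z]
  abel

end SatisfiesGrayIdentity

end GrayIdentity

section ComplexStructure

variable {R V M : Type*} [CommRing R] [AddCommGroup V] [Module R V] [AddCommGroup M] [Module R M]
  {J : V →ₗ[R] V}

theorem apply_J_left_eq_neg_apply_J_right (hJ2 : ∀ x, J (J x) = -x)
    {B : V →ₗ[R] V →ₗ[R] M} (hB : ∀ x y, B (J x) (J y) = B x y) (x y : V) :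
    B (J x) y = -B x (J y) := by
  rw [← hB x (J y), hJ2, map_neg, neg_neg]

theorem satisfiesGrayIdentity_of_invariant_left (hJ2 : ∀ x, J (J x) = -x)
    {Θ : V →ₗ[R] V →ₗ[R] V →ₗ[R] V →ₗ[R] M} (hΘ : ∀ x y, Θ (J x) (J y) = Θ x y) :
    SatisfiesGrayIdentity J (fun x y z w => Θ x z y w) := by
  intro x y z w
  simp only [apply_J_left_eq_neg_apply_J_right hJ2 hΘ, hJ2, map_neg,
    LinearMap.neg_apply, neg_neg]
  abel

end ComplexStructure

theorem stmt_3_general {V : Type*} [AddCommGroup V] [Module ℝ V]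
    (J : V →ₗ[ℝ] V) (hJ2 : ∀ x, J (J x) = -x)
    (Θ : V →ₗ[ℝ] V →ₗ[ℝ] V →ₗ[ℝ] V →ₗ[ℝ] ℝ)
    (hΘJ : ∀ x y z w, Θ (J x) (J y) z w = Θ x y z w) :
    ∀ x y z w, LTheta Θ x y z w + LTheta Θ (J x) (J y) (J z) (J w) =
      LTheta Θ (J x) (J y) z w + LTheta Θ x y (J z) (J w) + LTheta Θ (J x) y (J z) w +
      LTheta Θ x (J y) z (J w) + LTheta Θ (J x) y z (J w) + LTheta Θ x (J y) (J z) w := by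
  have hT : SatisfiesGrayIdentity J (fun x y z w => Θ x z y w) :=
    satisfiesGrayIdentity_of_invariant_left hJ2 fun x y => by ext z w; exact hΘJ x y z w
  exact ((hT.add hT.swap_left.swap_right).sub hT.swap_right).sub hT.swap_left

/-- if `Θ` is in addition `J`-invariant in its first pair of arguments,
then `L(Θ)` satisfies the Gray identity. -/
theorem stmt_3 {V : Type*} [AddCommGroup V] [Module ℝ V]
    (J : V →ₗ[ℝ] V) (hJ2 : ∀ x, J (J x) = -x)
    (Θ : V →ₗ[ℝ] V →ₗ[ℝ] V →ₗ[ℝ] V →ₗ[ℝ] ℝ)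
    (hΘ1 : ∀ x y z w, Θ x y z w = Θ y x z w)
    (hΘ2 : ∀ x y z w, Θ x y z w = Θ x y w z)
    (hΘJ : ∀ x y z w, Θ (J x) (J y) z w = Θ x y z w) :
    ∀ x y z w, LTheta Θ x y z w + LTheta Θ (J x) (J y) (J z) (J w) =
      LTheta Θ (J x) (J y) z w + LTheta Θ x y (J z) (J w) + LTheta Θ (J x) y (J z) w +
      LTheta Θ x (J y) z (J w) + LTheta Θ (J x) y z (J w) + LTheta Θ x (J y) (J z) w :=
  stmt_3_general J hJ2 Θ hΘJ
end

section
/- If A is an algebraic curvature tensor satisfying A(Jx,Jy,z,w) = A(x,y,z,w) for all x,y,z,w, then A satisfies the Gray identity. -/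
/-! Invariance under `J` in the first pair of slots, together with `J² = -1`, lets `J` move from
the first slot to the second at the cost of a sign; by pair symmetry `A` is also invariant under
`J` in the last pair. Hence both sides equal `2 A(x,y,z,w)`: the remaining four terms on the right
cancel in pairs once `J` is moved off `x`. -/

theorem LinearMap.apply_map_left_eq_neg_apply_map_right {R M N : Type*} [CommRing R]
    [AddCommGroup M] [Module R M] [AddCommGroup N] [Module R N]
    (J : M →ₗ[R] M) (hJ2 : ∀ x, J (J x) = -x) (B : M →ₗ[R] M →ₗ[R] N)
    (hB : ∀ x y, B (J x) (J y) = B x y) (x y : M) :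
    B (J x) y = -B x (J y) :=
  calc B (J x) y = B (J (J x)) (J y) := (hB _ _).symm
    _ = -B x (J y) := by rw [hJ2, map_neg, LinearMap.neg_apply]

theorem stmt_5_general {V : Type*} [AddCommGroup V] [Module ℝ V]
    (J : V →ₗ[ℝ] V) (hJ2 : ∀ x, J (J x) = -x)
    (A : V →ₗ[ℝ] V →ₗ[ℝ] V →ₗ[ℝ] V →ₗ[ℝ] ℝ)
    (hA2 : ∀ x y z w, A x y z w = A z w x y)
    (hJJ : ∀ x y z w, A (J x) (J y) z w = A x y z w) :
    ∀ x y z w, A x y z w + A (J x) (J y) (J z) (J w) =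
      A (J x) (J y) z w + A x y (J z) (J w) + A (J x) y (J z) w +
      A x (J y) z (J w) + A (J x) y z (J w) + A x (J y) (J z) w := by
  have hJJ' : ∀ x y z w, A x y (J z) (J w) = A x y z w := fun x y z w => by
    rw [hA2, hJJ, ← hA2]
  have hJJ_pair : ∀ x y, A (J x) (J y) = A x y := fun x y => by
    ext z w
    exact hJJ x y z w
  have hJ_swap : ∀ x y z w, A (J x) y z w = -A x (J y) z w := fun x y z w => by
    rw [LinearMap.apply_map_left_eq_neg_apply_map_right (N := V →ₗ[ℝ] V →ₗ[ℝ] ℝ) J hJ2 A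
      hJJ_pair x y, LinearMap.neg_apply, LinearMap.neg_apply]
  intro x y z w
  rw [hJJ x y (J z) (J w), hJJ' x y z w, hJJ x y z w, hJ_swap x y (J z) w, hJ_swap x y z (J w)]
  ring

/-- an algebraic curvature tensor with `A(Jx,Jy,z,w) = A(x,y,z,w)`
satisfies the Gray identity. -/
theorem stmt_5 {V : Type*} [AddCommGroup V] [Module ℝ V]
    (J : V →ₗ[ℝ] V) (hJ2 : ∀ x, J (J x) = -x)
    (A : V →ₗ[ℝ] V →ₗ[ℝ] V →ₗ[ℝ] V →ₗ[ℝ] ℝ)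
    (hA1 : ∀ x y z w, A x y z w = -A y x z w)
    (hA2 : ∀ x y z w, A x y z w = A z w x y)
    (hBianchi : ∀ x y z w, A x y z w + A y z x w + A z x y w = 0)
    (hJJ : ∀ x y z w, A (J x) (J y) z w = A x y z w) :
    ∀ x y z w, A x y z w + A (J x) (J y) (J z) (J w) =
      A (J x) (J y) z w + A x y (J z) (J w) + A (J x) y (J z) w +
      A x (J y) z (J w) + A (J x) y z (J w) + A x (J y) (J z) w :=
  stmt_5_general J hJ2 A hA2 hJJ
end
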